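/- Let θ > 0, γ > 0 satisfy (1+γ)θ < 1, and let C, D > 0. Then there is no continuous nonnegative function h : (0, ∞) → ℝ satisfying h(t) ≥ C t^{−θ} + D ∫₀ᵗ h(s)^{1+γ} (t−s)^{−θ} ds for all t > 0. -/

import Mathlib

/-!
Set `δ = 1 - θ`. The initial term gives `h ≥ m := C (2T)^(-θ)` on `[T, 2T]`. If `h ≥ M` on
`[a, 2T]`, then for `t ∈ (a, 2T]` the integral over `(a, t)` alone gives
`h t ≥ D M^(1+γ) (t - a)^δ`. Iterating along the intervals `[2T - T/2ⁿ, 2T]`, whose left end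
points gain `T/2ⁿ⁺¹` at each step, yields `h ≥ m Bⁿ` there with `B^γ = 2^δ`, provided
`2^δ B ≤ D m^γ T^δ`. Since `m^γ T^δ` is a multiple of `T^(δ - θγ)` and `θγ < δ`, this holds for
`T` large, and then `h (2T) ≥ m Bⁿ` for all `n` with `B > 1`, which is absurd.
-/

open MeasureTheory Set Filter

def IsRenewalSupersolution (θ γ C D : ℝ) (h : ℝ → ℝ) : Prop :=
  (∀ t ∈ Ioi (0 : ℝ), 0 ≤ h t) ∧
    ∀ t : ℝ, 0 < t →
      ENNReal.ofReal (C * t ^ (-θ))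
        + ENNReal.ofReal D * ∫⁻ s in Ioo 0 t, ENNReal.ofReal (h s ^ (1 + γ) * (t - s) ^ (-θ))
        ≤ ENNReal.ofReal (h t)

lemma ofReal_rpow_mul_le_setLIntegral_kernel {h : ℝ → ℝ} {θ p m a t : ℝ} (hθ : 0 ≤ θ)
    (hp : 0 ≤ p) (hm : 0 ≤ m) (ha : 0 ≤ a) (hat : a < t) (hmh : ∀ s ∈ Ioo a t, m ≤ h s) :
    ENNReal.ofReal (m ^ p * (t - a) ^ (1 - θ))
      ≤ ∫⁻ s in Ioo 0 t, ENNReal.ofReal (h s ^ p * (t - s) ^ (-θ)) := by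
  have hkernel : ∀ s ∈ Ioo a t,
      ENNReal.ofReal (m ^ p * (t - a) ^ (-θ)) ≤ ENNReal.ofReal (h s ^ p * (t - s) ^ (-θ)) := by
    intro s hs
    have hms : m ≤ h s := hmh s hs
    refine ENNReal.ofReal_le_ofReal (mul_le_mul (Real.rpow_le_rpow hm hms hp)
      (Real.rpow_le_rpow_of_nonpos (by linarith [hs.2]) (by linarith [hs.1]) (by linarith))
      (by positivity) (Real.rpow_nonneg (hm.trans hms) p))
  calc ENNReal.ofReal (m ^ p * (t - a) ^ (1 - θ))
      = ENNReal.ofReal (m ^ p * (t - a) ^ (-θ)) * ENNReal.ofReal (t - a) := by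
        rw [← ENNReal.ofReal_mul (by positivity), mul_assoc, sub_eq_neg_add (1 : ℝ),
          Real.rpow_add_one (sub_pos.mpr hat).ne']
    _ = ∫⁻ _ in Ioo a t, ENNReal.ofReal (m ^ p * (t - a) ^ (-θ)) := by
        rw [setLIntegral_const, Real.volume_Ioo]
    _ ≤ ∫⁻ s in Ioo a t, ENNReal.ofReal (h s ^ p * (t - s) ^ (-θ)) :=
        setLIntegral_mono' measurableSet_Ioo hkernel
    _ ≤ ∫⁻ s in Ioo 0 t, ENNReal.ofReal (h s ^ p * (t - s) ^ (-θ)) :=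
        lintegral_mono_set (Ioo_subset_Ioo ha le_rfl)

lemma mul_pow_succ_le_of_gain {m B T D γ δ : ℝ} (hm : 0 ≤ m) (hB : 0 ≤ B) (hT : 0 ≤ T)
    (hγ : 1 + γ ≠ 0) (hBγ : B ^ γ = 2 ^ δ) (hgain : 2 ^ δ * B ≤ D * m ^ γ * T ^ δ) (n : ℕ) :
    m * B ^ (n + 1) ≤ D * ((m * B ^ n) ^ (1 + γ) * (T / 2 ^ (n + 1)) ^ δ) := by
  have hq : (0 : ℝ) < 2 ^ δ := by positivity
  have hpow : (B ^ n) ^ γ = (2 ^ δ) ^ n := by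
    rw [← Real.rpow_natCast_mul hB, mul_comm, Real.rpow_mul_natCast hB, hBγ]
  have hscale : (T / 2 ^ (n + 1)) ^ δ = T ^ δ / (2 ^ δ) ^ (n + 1) := by
    rw [Real.div_rpow hT (by positivity), ← Real.rpow_natCast_mul zero_le_two, mul_comm,
      Real.rpow_mul_natCast zero_le_two]
  have hB_le : B ≤ D * m ^ γ * T ^ δ / 2 ^ δ := by
    rw [le_div_iff₀ hq]; linarith
  calc m * B ^ (n + 1) = m * B ^ n * B := by rw [pow_succ, mul_assoc]
    _ ≤ m * B ^ n * (D * m ^ γ * T ^ δ / 2 ^ δ) := by gcongr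
    _ = D * ((m * B ^ n) ^ (1 + γ) * (T / 2 ^ (n + 1)) ^ δ) := by
        rw [Real.rpow_one_add' (by positivity) hγ, Real.mul_rpow hm (by positivity), hpow,
          hscale]
        field_simp
        ring

namespace IsRenewalSupersolution

variable {θ γ C D : ℝ} {h : ℝ → ℝ}

lemma mul_rpow_le (hh : IsRenewalSupersolution θ γ C D h) (hθ : 0 ≤ θ) (hC : 0 ≤ C) {t b : ℝ}
    (ht : 0 < t) (htb : t ≤ b) : C * b ^ (-θ) ≤ h t := by
  calc C * b ^ (-θ)
      ≤ C * t ^ (-θ) :=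
        mul_le_mul_of_nonneg_left (Real.rpow_le_rpow_of_nonpos ht htb (by linarith)) hC
    _ ≤ h t :=
        (ENNReal.ofReal_le_ofReal_iff (hh.1 t ht)).mp (le_trans le_self_add (hh.2 t ht))

lemma mul_rpow_mul_le (hh : IsRenewalSupersolution θ γ C D h) (hθ : 0 ≤ θ) (hγ : 0 ≤ 1 + γ)
    (hD : 0 ≤ D) {m a t : ℝ} (hm : 0 ≤ m) (ha : 0 ≤ a) (hat : a < t)
    (hmh : ∀ s ∈ Ioo a t, m ≤ h s) : D * (m ^ (1 + γ) * (t - a) ^ (1 - θ)) ≤ h t := by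
  have ht : 0 < t := ha.trans_lt hat
  refine (ENNReal.ofReal_le_ofReal_iff (hh.1 t ht)).mp ?_
  calc ENNReal.ofReal (D * (m ^ (1 + γ) * (t - a) ^ (1 - θ)))
      = ENNReal.ofReal D * ENNReal.ofReal (m ^ (1 + γ) * (t - a) ^ (1 - θ)) :=
        ENNReal.ofReal_mul hD
    _ ≤ ENNReal.ofReal D *
          ∫⁻ s in Ioo 0 t, ENNReal.ofReal (h s ^ (1 + γ) * (t - s) ^ (-θ)) := by
        gcongr
        exact ofReal_rpow_mul_le_setLIntegral_kernel hθ hγ hm ha hat hmh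
    _ ≤ ENNReal.ofReal (h t) := le_trans le_add_self (hh.2 t ht)

lemma mul_pow_le_of_mem_Icc (hh : IsRenewalSupersolution θ γ C D h) (hθ : 0 ≤ θ)
    (hθ₁ : θ ≤ 1) (hγ : 0 ≤ γ) (hD : 0 ≤ D) {m B T : ℝ} (hm : 0 ≤ m) (hB : 0 ≤ B)
    (hT : 0 < T) (hBγ : B ^ γ = 2 ^ (1 - θ)) (hgain : 2 ^ (1 - θ) * B ≤ D * m ^ γ * T ^ (1 - θ))
    (hinit : ∀ t ∈ Icc T (2 * T), m ≤ h t) :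
    ∀ n : ℕ, ∀ t ∈ Icc (2 * T - T / 2 ^ n) (2 * T), m * B ^ n ≤ h t := by
  intro n
  induction n with
  | zero =>
    intro t ht
    simpa using hinit t ⟨by linarith [ht.1], ht.2⟩
  | succ n ih =>
    intro t ht
    set a := 2 * T - T / 2 ^ n
    have hstep : T / 2 ^ (n + 1) ≤ t - a := by
      have : T / 2 ^ n = 2 * (T / 2 ^ (n + 1)) := by rw [pow_succ]; field_simp
      linarith [ht.1]
    have ha : T ≤ a := by
      have : T / 2 ^ n ≤ T := div_le_self hT.le (one_le_pow₀ one_le_two)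
      linarith
    have hat : a < t := by linarith [show 0 < T / 2 ^ (n + 1) by positivity]
    calc m * B ^ (n + 1)
        ≤ D * ((m * B ^ n) ^ (1 + γ) * (T / 2 ^ (n + 1)) ^ (1 - θ)) :=
          mul_pow_succ_le_of_gain hm hB hT.le (by linarith) hBγ hgain n
      _ ≤ D * ((m * B ^ n) ^ (1 + γ) * (t - a) ^ (1 - θ)) := by
          gcongr
      _ ≤ h t :=
          hh.mul_rpow_mul_le hθ (by linarith) hD (by positivity) (by linarith) hat
            fun s hs => ih s ⟨hs.1.le, hs.2.le.trans ht.2⟩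

end IsRenewalSupersolution

lemma exists_le_mul_rpow_mul_rpow {θ γ C D : ℝ} (hC : 0 < C) (hD : 0 < D)
    (hθγ : θ * γ < 1 - θ) (K : ℝ) :
    ∃ T > 0, K ≤ D * (C * (2 * T) ^ (-θ)) ^ γ * T ^ (1 - θ) := by
  have hlim : Tendsto (fun T : ℝ => D * C ^ γ * 2 ^ (-(θ * γ)) * T ^ (1 - θ - θ * γ))
      atTop atTop :=
    (tendsto_rpow_atTop (by linarith)).const_mul_atTop (by positivity)
  have heq : ∀ T > (0 : ℝ), D * C ^ γ * 2 ^ (-(θ * γ)) * T ^ (1 - θ - θ * γ)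
      = D * (C * (2 * T) ^ (-θ)) ^ γ * T ^ (1 - θ) := by
    intro T hT
    rw [Real.mul_rpow hC.le (by positivity), ← Real.rpow_mul (by positivity),
      Real.mul_rpow zero_le_two hT.le, sub_eq_add_neg (1 - θ), Real.rpow_add hT]
    ring_nf
  obtain ⟨T, hK, hT⟩ := ((hlim.eventually_ge_atTop K).and (eventually_gt_atTop 0)).exists
  exact ⟨T, hT, heq T hT ▸ hK⟩

/-- Remark following Proposition 2.8 of the paper.
Let `θ > 0`, `γ > 0` satisfy `(1+γ)θ < 1`, and let `C, D > 0`.  Then there is no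
continuous nonnegative function `h : (0, ∞) → ℝ` satisfying
`h t ≥ C t^(-θ) + D ∫₀ᵗ h(s)^(1+γ) (t-s)^(-θ) ds` for all `t > 0`, where the
integral is the Lebesgue integral of the nonnegative integrand over `(0, t)`. -/
theorem no_global_solution_renewal_inequality_singular_initial
    (θ γ C D : ℝ) (hθ : 0 < θ) (hγ : 0 < γ) (hsub : (1 + γ) * θ < 1)
    (hC : 0 < C) (hD : 0 < D) :
    ¬ ∃ h : ℝ → ℝ,
      ContinuousOn h (Set.Ioi 0) ∧
      (∀ t ∈ Set.Ioi (0 : ℝ), 0 ≤ h t) ∧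
      (∀ t : ℝ, 0 < t →
        ENNReal.ofReal (C * t ^ (-θ))
          + ENNReal.ofReal D *
            ∫⁻ s in Set.Ioo 0 t, ENNReal.ofReal (h s ^ (1 + γ) * (t - s) ^ (-θ))
          ≤ ENNReal.ofReal (h t)) := by
  rintro ⟨h, -, hnn, hineq⟩
  have hh : IsRenewalSupersolution θ γ C D h := ⟨hnn, hineq⟩
  set B : ℝ := 2 ^ ((1 - θ) / γ)
  have hB : 1 < B := Real.one_lt_rpow one_lt_two (div_pos (by nlinarith) hγ)
  have hBγ : B ^ γ = 2 ^ (1 - θ) := by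
    rw [← Real.rpow_mul zero_le_two, div_mul_cancel₀ _ hγ.ne']
  obtain ⟨T, hT, hgain⟩ :=
    exists_le_mul_rpow_mul_rpow hC hD (by linarith : θ * γ < 1 - θ) (2 ^ (1 - θ) * B)
  set m := C * (2 * T) ^ (-θ)
  have hm : 0 < m := by positivity
  have hgrowth := hh.mul_pow_le_of_mem_Icc hθ.le (by nlinarith) hγ.le hD.le hm.le
    (by positivity) hT hBγ hgain fun t ht => hh.mul_rpow_le hθ.le hC.le (by linarith [ht.1]) ht.2
  obtain ⟨n, hn⟩ := pow_unbounded_of_one_lt (h (2 * T) / m) hB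
  have hle : m * B ^ n ≤ h (2 * T) :=
    hgrowth n (2 * T) ⟨by linarith [show 0 < T / 2 ^ n by positivity], le_rfl⟩
  rw [div_lt_iff₀ hm] at hn
  linarith
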